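/- Any two points p, q ∈ ℂ³ can be connected by a finite chain of entire holomorphic curves admissible for the 1-form x dy + dz; that is, ℂ³ is connected by holomorphic integral curves of the standard holomorphic contact distribution {ker(x dy + dz)}. -/

import Mathlib

/-- The entire curve `(γ₁, γ₂, γ₃) : ℂ → ℂ³` is holomorphic and admissible for the
1-form `x dy + dz`, i.e. `γ₁(t)·γ₂′(t) + γ₃′(t) = 0` for all `t ∈ ℂ`. -/
def EntireAdmissibleContact (γ₁ γ₂ γ₃ : ℂ → ℂ) : Prop :=
  Differentiable ℂ γ₁ ∧ Differentiable ℂ γ₂ ∧ Differentiable ℂ γ₃ ∧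
  ∀ t : ℂ, γ₁ t * deriv γ₂ t + deriv γ₃ t = 0

/-- `q` is reachable from `p` by a chain of `m + 1` entire holomorphic curves
admissible for the contact form `x dy + dz`. -/
def EntireContactChain (m : ℕ) (γ₁ γ₂ γ₃ : Fin (m + 1) → ℂ → ℂ) (p q : ℂ × ℂ × ℂ) : Prop :=
  (∀ i, EntireAdmissibleContact (γ₁ i) (γ₂ i) (γ₃ i)) ∧
  (γ₁ 0 0, γ₂ 0 0, γ₃ 0 0) = p ∧
  (∀ i : Fin m,
    (γ₁ i.castSucc 1, γ₂ i.castSucc 1, γ₃ i.castSucc 1) =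
    (γ₁ i.succ 0, γ₂ i.succ 0, γ₃ i.succ 0)) ∧
  (γ₁ (Fin.last m) 1, γ₂ (Fin.last m) 1, γ₃ (Fin.last m) 1) = q

/-!
Straight segments already suffice. Moving `x` alone is always admissible, and moving `y` by `s`
at constant `x` is admissible when `z` moves by `-x s`. So from `p` one sets `x = 1` and moves `y`
to put `z` at its target value, then sets `x = 0` and moves `y` to its target without disturbing
`z`, and finally moves `x` to its target.
-/

def ContactStep (p q : ℂ × ℂ × ℂ) : Prop :=
  ∃ γ₁ γ₂ γ₃ : ℂ → ℂ, EntireAdmissibleContact γ₁ γ₂ γ₃ ∧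
    (γ₁ 0, γ₂ 0, γ₃ 0) = p ∧ (γ₁ 1, γ₂ 1, γ₃ 1) = q

def ContactReachable (p q : ℂ × ℂ × ℂ) : Prop :=
  ∃ (m : ℕ) (γ₁ γ₂ γ₃ : Fin (m + 1) → ℂ → ℂ), EntireContactChain m γ₁ γ₂ γ₃ p q

theorem ContactStep.reachable {p q : ℂ × ℂ × ℂ} (h : ContactStep p q) :
    ContactReachable p q := by
  obtain ⟨γ₁, γ₂, γ₃, hγ, h₀, h₁⟩ := h
  exact ⟨0, fun _ => γ₁, fun _ => γ₂, fun _ => γ₃, fun _ => hγ, h₀, finZeroElim, h₁⟩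

theorem ContactReachable.tail {p q r : ℂ × ℂ × ℂ} (hpq : ContactReachable p q)
    (hqr : ContactStep q r) : ContactReachable p r := by
  obtain ⟨m, γ₁, γ₂, γ₃, hγ, hp, hlink, hq⟩ := hpq
  obtain ⟨δ₁, δ₂, δ₃, hδ, hq', hr⟩ := hqr
  refine ⟨m + 1, Fin.snoc γ₁ δ₁, Fin.snoc γ₂ δ₂, Fin.snoc γ₃ δ₃, ?_, ?_, ?_, ?_⟩
  · intro i
    induction i using Fin.lastCases with
    | last => simpa only [Fin.snoc_last] using hδ
    | cast i => simpa only [Fin.snoc_castSucc] using hγ i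
  · simpa only [← Fin.castSucc_zero, Fin.snoc_castSucc] using hp
  · intro i
    induction i using Fin.lastCases with
    | last => simpa only [Fin.succ_last, Fin.snoc_last, Fin.snoc_castSucc, hq'] using hq
    | cast i => simpa only [Fin.succ_castSucc, Fin.snoc_castSucc] using hlink i
  · simpa only [Fin.snoc_last] using hr

theorem hasDerivAt_affine (c d t : ℂ) : HasDerivAt (fun s : ℂ => c + s * d) d t := by
  simpa using ((hasDerivAt_id t).mul_const d).const_add c

theorem contactStep_segment (p q : ℂ × ℂ × ℂ)
    (h : ∀ t : ℂ, (p.1 + t * (q.1 - p.1)) * (q.2.1 - p.2.1) + (q.2.2 - p.2.2) = 0) :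
    ContactStep p q := by
  refine ⟨fun t => p.1 + t * (q.1 - p.1), fun t => p.2.1 + t * (q.2.1 - p.2.1),
    fun t => p.2.2 + t * (q.2.2 - p.2.2), ⟨?_, ?_, ?_, fun t => ?_⟩, by simp, by simp⟩
  · exact fun t => (hasDerivAt_affine _ _ t).differentiableAt
  · exact fun t => (hasDerivAt_affine _ _ t).differentiableAt
  · exact fun t => (hasDerivAt_affine _ _ t).differentiableAt
  · rw [(hasDerivAt_affine _ _ t).deriv, (hasDerivAt_affine _ _ t).deriv]
    exact h t

/-- ℂ³ is connected by finite chains of entire holomorphic curves admissible for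
the standard holomorphic contact form `x dy + dz`. -/
theorem C3_connected_by_contact_admissible_curves (p q : ℂ × ℂ × ℂ) :
    ∃ (m : ℕ) (γ₁ γ₂ γ₃ : Fin (m + 1) → ℂ → ℂ), EntireContactChain m γ₁ γ₂ γ₃ p q := by
  obtain ⟨p₁, p₂, p₃⟩ := p
  obtain ⟨q₁, q₂, q₃⟩ := q
  set y := p₂ + (p₃ - q₃)
  have h₁ := contactStep_segment (p₁, p₂, p₃) (1, p₂, p₃) fun t => by ring
  have h₂ := contactStep_segment (1, p₂, p₃) (1, y, q₃) fun t => by ring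
  have h₃ := contactStep_segment (1, y, q₃) (0, y, q₃) fun t => by ring
  have h₄ := contactStep_segment (0, y, q₃) (0, q₂, q₃) fun t => by ring
  have h₅ := contactStep_segment (0, q₂, q₃) (q₁, q₂, q₃) fun t => by ring
  exact ((((h₁.reachable.tail h₂).tail h₃).tail h₄).tail h₅)
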